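/- arXiv:2310.12834 — 4 statements merged into one kernel-verified Lean document; each statement's English description precedes it below -/
import Mathlib

section
/- Let T be a lexicographically ordered ω₁-tree with exactly ℵ₂-many cofinal branches. Then the linear order (𝓑(T), <lex) is a Kurepa line: it has cardinality ℵ₂, the closure in its order topology of every countable subset is countable, and its density (the least cardinality of a subset that is dense in the order topology) is exactly ℵ₁. -/
noncomputable section

open Cardinal Set

def omega1 : Ordinal := (Cardinal.aleph 1).ord

def omega2 : Ordinal := (Cardinal.aleph 2).ord

/-- The height of an element `t`: the order type of its set of strict predecessors. -/
def htOf {X : Type} (lt : X → X → Prop)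
    (wo : ∀ t : X, IsWellOrder {s : X // lt s t} fun a b => lt a.1 b.1) (t : X) : Ordinal :=
  @Ordinal.type {s : X // lt s t} (fun a b => lt a.1 b.1) (wo t)

/-- A lexicographically ordered (normal) `ω₁`-tree. -/
structure LexOmega1Tree where
  T : Type
  lt : T → T → Prop
  lt_irrefl : ∀ a : T, ¬ lt a a
  lt_trans : ∀ {a b c : T}, lt a b → lt b c → lt a c
  /-- the strict predecessors of any element are well-ordered -/
  predWO : ∀ t : T, IsWellOrder {s : T // lt s t} fun a b => lt a.1 b.1
  /-- every level is countable -/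
  level_countable : ∀ α : Ordinal, {t : T | htOf lt predWO t = α}.Countable
  /-- levels are nonempty exactly below `ω₁` -/
  level_nonempty : ∀ α : Ordinal, (∃ t : T, htOf lt predWO t = α) ↔ α < omega1
  /-- normality: distinct elements of the same limit height have different predecessors -/
  normal : ∀ s t : T, htOf lt predWO s = htOf lt predWO t →
    Order.IsSuccLimit (htOf lt predWO s) → (∀ u : T, lt u s ↔ lt u t) → s = t
  /-- the lexicographic comparison of distinct elements of equal height -/
  lexlt : T → T → Prop
  lexlt_same : ∀ a b : T, lexlt a b → htOf lt predWO a = htOf lt predWO b ∧ a ≠ b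
  lexlt_tricho : ∀ a b : T, htOf lt predWO a = htOf lt predWO b → a ≠ b →
    lexlt a b ∨ lexlt b a
  lexlt_asymm : ∀ a b : T, lexlt a b → ¬ lexlt b a
  lexlt_trans : ∀ {a b c : T}, lexlt a b → lexlt b c → lexlt a c
  /-- coherence: the lexicographic comparison is decided at the splitting level -/
  lexlt_coh : ∀ a b a' b' : T, lexlt a b → lt a a' → lt b b' →
    htOf lt predWO a' = htOf lt predWO b' → lexlt a' b'

namespace LexOmega1Tree

variable (S : LexOmega1Tree)

def ht : S.T → Ordinal := htOf S.lt S.predWO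

def le (a b : S.T) : Prop := S.lt a b ∨ a = b

/-- a cofinal branch : a downward closed chain meeting every level -/
def IsBranch (b : Set S.T) : Prop :=
  (∀ s t : S.T, t ∈ b → S.lt s t → s ∈ b) ∧
  (∀ s t : S.T, s ∈ b → t ∈ b → s = t ∨ S.lt s t ∨ S.lt t s) ∧
  (∀ α : Ordinal, α < omega1 → ∃ t ∈ b, S.ht t = α)

/-- the set `𝓑(T)` of cofinal branches -/
def Branch : Type := {b : Set S.T // S.IsBranch b}

/-- the lexicographic order on branches (and on arbitrary sets of nodes) -/
def blex (A B : Set S.T) : Prop := ∃ a ∈ A, ∃ b ∈ B, S.lexlt a b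

/-- the order topology on `(𝓑(T), <lex)`, generated by the open rays -/
def branchTop : TopologicalSpace S.Branch :=
  TopologicalSpace.generateFrom
    {s : Set S.Branch | ∃ a : S.Branch, s = {x | S.blex a.1 x.1} ∨ s = {x | S.blex x.1 a.1}}

/-- `b` is a local right end point of the downward closed subtree `W` -/
def IsLocalRightEP (W b : Set S.T) : Prop :=
  ∃ t ∈ b, ∀ s ∈ b, S.ht t ≤ S.ht s →
    ∀ u ∈ W, S.ht u = S.ht s → S.le t u → u = s ∨ S.lexlt u s

/-- `b` is a local left end point of the downward closed subtree `W` -/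
def IsLocalLeftEP (W b : Set S.T) : Prop :=
  ∃ t ∈ b, ∀ s ∈ b, S.ht t ≤ S.ht s →
    ∀ u ∈ W, S.ht u = S.ht s → S.le t u → u = s ∨ S.lexlt s u

def IsLocalEP (W b : Set S.T) : Prop := S.IsLocalRightEP W b ∨ S.IsLocalLeftEP W b

end LexOmega1Tree

open Ordinal

/-!
There are at most `ℵ₁` nodes, and every open set of branches contains all branches through
some node, so one branch through each node gives a dense set of size `ℵ₁`.

For a countable set `A` of branches, all splitting levels of pairs from `A` lie below some
`μ < ω₁`. A branch `c ∈ closure A \ A` is a one-sided limit of `A`, and then every branch on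
that side of `c` splits from `c` below `μ`; so `c` is the only limit of `A` from that side
through its node of height `μ`. Hence `closure A` is `A` plus at most two branches per node of
the countable level `μ`. As there are `ℵ₂ > ℵ₀` branches, no countable set is dense.
-/

lemma omega1_eq_omega_one : omega1 = ω₁ := Cardinal.ord_aleph 1

lemma omega1_pos : 0 < omega1 := omega1_eq_omega_one ▸ omega_pos 1

namespace LexOmega1Tree

variable {S : LexOmega1Tree}

lemma ht_lt_omega1 (t : S.T) : S.ht t < omega1 :=
  (S.level_nonempty (S.ht t)).1 ⟨t, rfl⟩

lemma ht_lt_ht {s t : S.T} (h : S.lt s t) : S.ht s < S.ht t := by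
  let := S.predWO s
  let := S.predWO t
  exact PrincipalSeg.ordinal_type_lt
    { toFun := fun u => ⟨u.1, S.lt_trans u.2 h⟩
      inj' := fun a b hab => Subtype.ext (congrArg Subtype.val hab :)
      map_rel_iff' := Iff.rfl
      top := ⟨s, h⟩
      mem_range_iff_rel' := fun b =>
        ⟨by rintro ⟨a, rfl⟩; exact a.2, fun hb => ⟨⟨b.1, hb⟩, rfl⟩⟩ }

lemma mk_T_le_aleph_one (S : LexOmega1Tree) : #S.T ≤ ℵ₁ := by
  let f : S.T → omega1.ToType := fun t => Ordinal.ToType.mk ⟨S.ht t, ht_lt_omega1 t⟩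
  have hfiber (x : omega1.ToType) : #(f ⁻¹' {x}) ≤ ℵ₀ := by
    refine Cardinal.le_aleph0_iff_set_countable.2
      ((S.level_countable (Ordinal.ToType.mk.symm x)).mono ?_)
    rintro t rfl
    simp [f, ht]
  calc #S.T ≤ #omega1.ToType * ℵ₀ := Cardinal.mk_le_mk_mul_of_mk_preimage_le f hfiber
    _ = ℵ₁ := by
      rw [Cardinal.mk_toType, omega1, Cardinal.card_ord,
        Cardinal.mul_aleph0_eq (Cardinal.aleph0_le_aleph 1)]

namespace Branch

lemma eq_of_mem_of_ht_eq {b : S.Branch} {s t : S.T} (hsb : s ∈ b.1) (htb : t ∈ b.1)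
    (h : S.ht s = S.ht t) : s = t := by
  rcases b.2.2.1 s t hsb htb with h' | h' | h'
  · exact h'
  · exact absurd h (ht_lt_ht h').ne
  · exact absurd h (ht_lt_ht h').ne'

open scoped Classical in
/-- The node `b(α)`; a junk node of `b` when `α ≥ ω₁`. -/
def node (b : S.Branch) (α : Ordinal) : S.T :=
  if h : ∃ t ∈ b.1, S.ht t = α then h.choose else (b.2.2.2 0 omega1_pos).choose

variable {b c : S.Branch} {α β : Ordinal}

lemma node_spec (hα : α < omega1) : b.node α ∈ b.1 ∧ S.ht (b.node α) = α := by
  have h : ∃ t ∈ b.1, S.ht t = α := b.2.2.2 α hα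
  rw [node, dif_pos h]
  exact h.choose_spec

lemma node_mem (hα : α < omega1) : b.node α ∈ b.1 := (node_spec hα).1

lemma ht_node (hα : α < omega1) : S.ht (b.node α) = α := (node_spec hα).2

lemma node_ht_of_mem {t : S.T} (h : t ∈ b.1) : b.node (S.ht t) = t :=
  eq_of_mem_of_ht_eq (node_mem (ht_lt_omega1 t)) h (ht_node (ht_lt_omega1 t))

lemma node_eq_of_mem (hα : α < omega1) (h : c.node α ∈ b.1) : b.node α = c.node α :=
  eq_of_mem_of_ht_eq (node_mem hα) h (by rw [ht_node hα, ht_node hα])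

lemma ht_node_eq_ht_node (hα : α < omega1) : S.ht (b.node α) = S.ht (c.node α) := by
  rw [ht_node hα, ht_node hα]

lemma node_lt_node (h : α < β) (hβ : β < omega1) : S.lt (b.node α) (b.node β) := by
  have hα := h.trans hβ
  rcases b.2.2.1 _ _ (node_mem hα) (node_mem hβ) with h' | h' | h'
  · exact absurd (by rw [← ht_node hα, h', ht_node hβ]) h.ne
  · exact h'
  · exact absurd (ht_node hβ ▸ ht_node hα ▸ ht_lt_ht h') h.not_gt

lemma ext_node (h : ∀ α < omega1, b.node α = c.node α) : b = c := by
  refine Subtype.ext (Set.ext fun t => ⟨fun htb => ?_, fun htc => ?_⟩)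
  · rw [← node_ht_of_mem htb, h _ (ht_lt_omega1 t)]
    exact node_mem (ht_lt_omega1 t)
  · rw [← node_ht_of_mem htc, ← h _ (ht_lt_omega1 t)]
    exact node_mem (ht_lt_omega1 t)

lemma node_eq_of_le (hβ : β < omega1) (h : b.node β = c.node β) (hαβ : α ≤ β) :
    b.node α = c.node α := by
  rcases hαβ.eq_or_lt with rfl | hlt
  · exact h
  · have hmem : b.node α ∈ c.1 := c.2.1 _ _ (node_mem hβ) (h ▸ node_lt_node hlt hβ)
    exact (node_eq_of_mem (hlt.trans hβ) hmem).symm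

lemma lexlt_node_of_le (h : S.lexlt (b.node α) (c.node α)) (hαβ : α ≤ β)
    (hβ : β < omega1) :
    S.lexlt (b.node β) (c.node β) := by
  rcases hαβ.eq_or_lt with rfl | hlt
  · exact h
  · exact S.lexlt_coh _ _ _ _ h (node_lt_node hlt hβ) (node_lt_node hlt hβ)
      (ht_node_eq_ht_node hβ)

lemma node_mem_of_le {x y : S.Branch} (hαβ : α ≤ β) (hβ : β < omega1)
    (h : x.node β ∈ y.1) : x.node α ∈ y.1 := by
  rw [← node_eq_of_le hβ (node_eq_of_mem hβ h) hαβ]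
  exact node_mem (hαβ.trans_lt hβ)

instance : LT S.Branch := ⟨fun b c => S.blex b.1 c.1⟩

lemma lt_iff_exists_lexlt : b < c ↔ ∃ α < omega1, S.lexlt (b.node α) (c.node α) := by
  refine ⟨fun ⟨s, hsb, t, htc, hst⟩ => ⟨S.ht s, ht_lt_omega1 s, ?_⟩,
    fun ⟨α, hα, h⟩ => ⟨_, node_mem hα, _, node_mem hα, h⟩⟩
  have hst' : S.ht s = S.ht t := (S.lexlt_same s t hst).1
  rwa [node_ht_of_mem hsb, hst', node_ht_of_mem htc]

/-- The paper's `Δ(b, c)`; junk value `0` when `b = c`. -/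
def split (b c : S.Branch) : Ordinal := sInf {α | b.node α ≠ c.node α}

lemma split_comm (b c : S.Branch) : split b c = split c b := by
  simp only [split, ne_comm]

lemma exists_node_ne (h : b ≠ c) : ∃ α < omega1, b.node α ≠ c.node α := by
  by_contra! h'
  exact h (ext_node h')

lemma node_split_ne (h : b ≠ c) : b.node (split b c) ≠ c.node (split b c) :=
  let ⟨α, _, hα⟩ := exists_node_ne h
  csInf_mem (s := {α | b.node α ≠ c.node α}) ⟨α, hα⟩

lemma split_lt_omega1 (b c : S.Branch) : split b c < omega1 := by
  by_cases h : b = c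
  · simpa [h, split] using omega1_pos
  · obtain ⟨α, hα, hne⟩ := exists_node_ne h
    exact (csInf_le' hne).trans_lt hα

lemma node_eq_of_lt_split (h : β < split b c) : b.node β = c.node β :=
  of_not_not (notMem_of_lt_csInf' h)

lemma lexlt_node_split (h : b < c) : S.lexlt (b.node (split b c)) (c.node (split b c)) := by
  obtain ⟨α, hα, hlex⟩ := lt_iff_exists_lexlt.1 h
  have hle : split b c ≤ α := csInf_le' (S.lexlt_same _ _ hlex).2
  have hs := split_lt_omega1 b c
  refine (S.lexlt_tricho _ _ (ht_node_eq_ht_node hs) (node_split_ne ?_)).resolve_right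
    fun h' => S.lexlt_asymm _ _ hlex (lexlt_node_of_le h' hle hα)
  rintro rfl
  exact (S.lexlt_same _ _ hlex).2 rfl

protected lemma lt_asymm (h : b < c) : ¬ c < b := fun h' =>
  S.lexlt_asymm _ _ (lexlt_node_split h) (split_comm b c ▸ lexlt_node_split h')

protected lemma lt_or_gt_of_ne (h : b ≠ c) : b < c ∨ c < b := by
  have hs := split_lt_omega1 b c
  exact (S.lexlt_tricho _ _ (ht_node_eq_ht_node hs) (node_split_ne h)).imp
    (lt_iff_exists_lexlt.2 ⟨_, hs, ·⟩) (lt_iff_exists_lexlt.2 ⟨_, hs, ·⟩)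

lemma split_le_split_right {a : S.Branch} (hab : a < b) (hbc : b < c) :
    split a c ≤ split b c := by
  by_contra! h
  refine Branch.lt_asymm hab (lt_iff_exists_lexlt.2 ⟨_, split_lt_omega1 b c, ?_⟩)
  rw [node_eq_of_lt_split h]
  exact lexlt_node_split hbc

lemma split_le_split_left {a : S.Branch} (hab : a < b) (hbc : b < c) :
    split a c ≤ split a b := by
  by_contra! h
  refine Branch.lt_asymm hbc (lt_iff_exists_lexlt.2 ⟨_, split_lt_omega1 a b, ?_⟩)
  rw [← node_eq_of_lt_split h]
  exact lexlt_node_split hab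

end Branch

attribute [local instance] branchTop

section Closure

open Branch

variable {A : Set S.Branch} {a c : S.Branch} {μ : Ordinal}

lemma isOpen_setOf_gt (a : S.Branch) : IsOpen {x : S.Branch | a < x} :=
  .basic _ ⟨a, Or.inl rfl⟩

lemma isOpen_setOf_lt (a : S.Branch) : IsOpen {x : S.Branch | x < a} :=
  .basic _ ⟨a, Or.inr rfl⟩

def IsLeftLimit (A : Set S.Branch) (c : S.Branch) : Prop := ∀ a < c, ∃ d ∈ A, a < d ∧ d < c

def IsRightLimit (A : Set S.Branch) (c : S.Branch) : Prop :=
  ∀ b, c < b → ∃ d ∈ A, c < d ∧ d < b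

def SplitsBelow (A : Set S.Branch) (μ : Ordinal) : Prop := ∀ d ∈ A, ∀ d' ∈ A, split d d' < μ

lemma isLeftLimit_or_isRightLimit_of_mem_closure (hc : c ∈ closure A) (hcA : c ∉ A) :
    IsLeftLimit A c ∨ IsRightLimit A c := by
  unfold IsLeftLimit IsRightLimit
  by_contra! h
  obtain ⟨⟨a, hac, ha⟩, ⟨b, hcb, hb⟩⟩ := h
  obtain ⟨d, ⟨had, hdb⟩, hdA⟩ := mem_closure_iff.1 hc _
    ((isOpen_setOf_gt a).inter (isOpen_setOf_lt b)) ⟨hac, hcb⟩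
  rcases eq_or_ne d c with rfl | hne
  · exact hcA hdA
  · rcases Branch.lt_or_gt_of_ne hne with hdc | hcd
    · exact ha d hdA had hdc
    · exact hb d hdA hcd hdb

lemma IsLeftLimit.split_lt (hbound : SplitsBelow A μ) (hc : IsLeftLimit A c) (hac : a < c) :
    split a c < μ := by
  obtain ⟨d, hdA, had, hdc⟩ := hc a hac
  obtain ⟨d', hd'A, hdd', hd'c⟩ := hc d hdc
  calc split a c ≤ split d c := split_le_split_right had hdc
    _ ≤ split d d' := split_le_split_left hdd' hd'c
    _ < μ := hbound d hdA d' hd'A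

lemma IsRightLimit.split_lt (hbound : SplitsBelow A μ) (hc : IsRightLimit A c) (hca : c < a) :
    split c a < μ := by
  obtain ⟨d, hdA, hcd, hda⟩ := hc a hca
  obtain ⟨d', hd'A, hcd', hd'd⟩ := hc d hcd
  calc split c a ≤ split c d := split_le_split_left hcd hda
    _ ≤ split d' d := split_le_split_right hcd' hd'd
    _ < μ := hbound d' hd'A d hdA

lemma lt_split_of_node_eq (hμ : μ < omega1) (h : a.node μ = c.node μ) (hne : a ≠ c) :
    μ < split a c :=
  not_le.1 fun hle => node_split_ne hne (node_eq_of_le hμ h hle)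

lemma subsingleton_isLeftLimit (hμ : μ < omega1) (hbound : SplitsBelow A μ) (t : S.T) :
    {c | IsLeftLimit A c ∧ c.node μ = t}.Subsingleton := by
  rintro c ⟨hc, rfl⟩ c' ⟨hc', hcc'⟩
  by_contra hne
  rcases Branch.lt_or_gt_of_ne hne with h | h
  · exact (lt_split_of_node_eq hμ hcc'.symm hne).not_gt (hc'.split_lt hbound h)
  · exact (lt_split_of_node_eq hμ hcc' (Ne.symm hne)).not_gt (hc.split_lt hbound h)

lemma subsingleton_isRightLimit (hμ : μ < omega1) (hbound : SplitsBelow A μ) (t : S.T) :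
    {c | IsRightLimit A c ∧ c.node μ = t}.Subsingleton := by
  rintro c ⟨hc, rfl⟩ c' ⟨hc', hcc'⟩
  by_contra hne
  rcases Branch.lt_or_gt_of_ne hne with h | h
  · exact (lt_split_of_node_eq hμ hcc'.symm hne).not_gt (hc.split_lt hbound h)
  · exact (lt_split_of_node_eq hμ hcc' (Ne.symm hne)).not_gt (hc'.split_lt hbound h)

lemma exists_split_lt_of_countable (hA : A.Countable) :
    ∃ μ < omega1, SplitsBelow A μ := by
  have := hA.to_subtype
  refine ⟨⨆ p : A × A, Order.succ (split p.1.1 p.2.1), ?_, fun d hd d' hd' => ?_⟩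
  · rw [omega1_eq_omega_one]
    exact Ordinal.iSup_lt_omega_one fun p => (isSuccLimit_omega 1).succ_lt
      (omega1_eq_omega_one ▸ split_lt_omega1 _ _)
  · exact (Order.lt_succ _).trans_le
      (le_ciSup Ordinal.bddAbove_of_small (⟨⟨d, hd⟩, ⟨d', hd'⟩⟩ : A × A))

theorem countable_closure (hA : A.Countable) : (closure A).Countable := by
  obtain ⟨μ, hμ, hbound⟩ := exists_split_lt_of_countable hA
  have hsub : closure A ⊆ A ∪ ⋃ t ∈ {t | S.ht t = μ},
      {c | IsLeftLimit A c ∧ c.node μ = t} ∪ {c | IsRightLimit A c ∧ c.node μ = t} := by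
    intro c hc
    by_cases hcA : c ∈ A
    · exact Or.inl hcA
    · refine Or.inr (Set.mem_biUnion (x := c.node μ) (ht_node hμ) ?_)
      rcases isLeftLimit_or_isRightLimit_of_mem_closure hc hcA with h | h
      exacts [Or.inl ⟨h, rfl⟩, Or.inr ⟨h, rfl⟩]
  refine (hA.union ((S.level_countable μ).biUnion fun t _ => ?_)).mono hsub
  exact (subsingleton_isLeftLimit hμ hbound t).countable.union
    (subsingleton_isRightLimit hμ hbound t).countable

end Closure

section Density

open Branch

lemma exists_node_subset_of_isOpen {U : Set S.Branch} (hU : IsOpen U) {x : S.Branch}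
    (hx : x ∈ U) : ∃ α < omega1, {y : S.Branch | x.node α ∈ y.1} ⊆ U := by
  induction hU generalizing x with
  | basic u hu =>
    obtain ⟨a, rfl | rfl⟩ := hu
    · have hs := split_lt_omega1 a x
      refine ⟨split a x, hs, fun y hy => lt_iff_exists_lexlt.2 ⟨_, hs, ?_⟩⟩
      rw [node_eq_of_mem hs hy]
      exact lexlt_node_split hx
    · have hs := split_lt_omega1 x a
      refine ⟨split x a, hs, fun y hy => lt_iff_exists_lexlt.2 ⟨_, hs, ?_⟩⟩
      rw [node_eq_of_mem hs hy]
      exact lexlt_node_split hx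
  | univ => exact ⟨0, omega1_pos, fun _ _ => trivial⟩
  | inter u v _ _ ihu ihv =>
    obtain ⟨α, hα, hu⟩ := ihu hx.1
    obtain ⟨β, hβ, hv⟩ := ihv hx.2
    have hγ := max_lt hα hβ
    exact ⟨max α β, hγ, fun y hy => ⟨hu (node_mem_of_le (le_max_left α β) hγ hy),
      hv (node_mem_of_le (le_max_right α β) hγ hy)⟩⟩
  | sUnion s _ ih =>
    obtain ⟨u, hus, hxu⟩ := hx
    obtain ⟨α, hα, hu⟩ := ih u hus hxu
    exact ⟨α, hα, fun y hy => ⟨u, hus, hu hy⟩⟩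

lemma exists_dense_mk_le : ∃ D : Set S.Branch, Dense D ∧ #D ≤ #S.T := by
  let pick : {t : S.T // ∃ b : S.Branch, t ∈ b.1} → S.Branch := fun t => t.2.choose
  refine ⟨range pick, dense_iff_inter_open.2 fun U hU ⟨x, hx⟩ => ?_,
    Cardinal.mk_range_le.trans (Cardinal.mk_subtype_le _)⟩
  obtain ⟨α, hα, hsub⟩ := exists_node_subset_of_isOpen hU hx
  let t : {t : S.T // ∃ b : S.Branch, t ∈ b.1} := ⟨x.node α, x, node_mem hα⟩
  exact ⟨pick t, hsub t.2.choose_spec, mem_range_self t⟩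

lemma aleph_one_le_mk_of_dense (hB : ℵ₀ < #S.Branch) {D : Set S.Branch} (hD : Dense D) :
    ℵ₁ ≤ #D := by
  by_contra! hlt
  have hcl := countable_closure
    (Cardinal.le_aleph0_iff_set_countable.1 (Cardinal.lt_aleph_one_iff.1 hlt))
  rw [hD.closure_eq, countable_univ_iff] at hcl
  exact hB.not_ge Cardinal.mk_le_aleph0

end Density

end LexOmega1Tree

/-- If `T` is a lexicographically ordered `ω₁`-tree with exactly `ℵ₂`-many
cofinal branches, then `(𝓑(T), <lex)` is a Kurepa line: it has cardinality `ℵ₂`, the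
closure (in the order topology) of every countable subset is countable, and its density
is exactly `ℵ₁`. -/
theorem stmt0 (S : LexOmega1Tree) (hcard : #S.Branch = Cardinal.aleph 2) :
    #S.Branch = Cardinal.aleph 2 ∧
    (∀ A : Set S.Branch, A.Countable → (@closure _ S.branchTop A).Countable) ∧
    (∃ D : Set S.Branch, @Dense _ S.branchTop D ∧ #D ≤ Cardinal.aleph 1) ∧
    (∀ D : Set S.Branch, @Dense _ S.branchTop D → Cardinal.aleph 1 ≤ #D) := by
  refine ⟨hcard, fun A hA => LexOmega1Tree.countable_closure hA, ?_,
    fun D hD => LexOmega1Tree.aleph_one_le_mk_of_dense ?_ hD⟩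
  · obtain ⟨D, hD, hDT⟩ := LexOmega1Tree.exists_dense_mk_le (S := S)
    exact ⟨D, hD, hDT.trans (LexOmega1Tree.mk_T_le_aleph_one S)⟩
  · rw [hcard]
    exact Cardinal.aleph0_lt_aleph_one.trans_le (Cardinal.aleph_le_aleph.2 one_le_two)
end
end

section
/- Assume the Continuum Hypothesis (2^ℵ₀ = ℵ₁). Then the poset Q satisfies the ℵ₂-chain condition: every antichain of Q (a set of pairwise incompatible conditions, where two conditions are incompatible if they have no common lower bound) has cardinality at most ℵ₁. -/
noncomputable section

open Cardinal Set

/-- A condition `p = (T_p, b_p)` of the poset `Q` over the set `Λ`: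
`T_p` is a lexicographically ordered countable normal tree of height `top + 1`
whose underlying set `carrier` is a subset of `Λ`, every element extends to the top
level, immediate-successor sets at non-top levels are countable dense linear orders
under the lexicographic order, and `b_p` is a countable partial function from `ω₂`
to the top level `T_p(top)`. -/
structure QCond (Λ : Type) where
  carrier : Set Λ
  carrier_countable : carrier.Countable
  lt : Λ → Λ → Prop
  lt_mem : ∀ a b : Λ, lt a b → a ∈ carrier ∧ b ∈ carrier
  lt_irrefl : ∀ a : Λ, ¬ lt a a
  lt_trans : ∀ {a b c : Λ}, lt a b → lt b c → lt a c
  predWO : ∀ t : Λ, IsWellOrder {s : Λ // lt s t} fun a b => lt a.1 b.1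
  /-- `α_p`, the height of the top level -/
  top : Ordinal
  ht_le : ∀ t ∈ carrier, htOf lt predWO t ≤ top
  ht_surj : ∀ β : Ordinal, β ≤ top → ∃ t ∈ carrier, htOf lt predWO t = β
  normal : ∀ s t : Λ, s ∈ carrier → t ∈ carrier → htOf lt predWO s = htOf lt predWO t →
    Order.IsSuccLimit (htOf lt predWO s) → (∀ u : Λ, lt u s ↔ lt u t) → s = t
  top_ext : ∀ t ∈ carrier, ∃ s ∈ carrier, (lt t s ∨ t = s) ∧ htOf lt predWO s = top
  lexlt : Λ → Λ → Prop
  lexlt_same : ∀ a b : Λ, lexlt a b → a ∈ carrier ∧ b ∈ carrier ∧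
    htOf lt predWO a = htOf lt predWO b ∧ a ≠ b
  lexlt_tricho : ∀ a b : Λ, a ∈ carrier → b ∈ carrier →
    htOf lt predWO a = htOf lt predWO b → a ≠ b → lexlt a b ∨ lexlt b a
  lexlt_asymm : ∀ a b : Λ, lexlt a b → ¬ lexlt b a
  lexlt_trans : ∀ {a b c : Λ}, lexlt a b → lexlt b c → lexlt a c
  lexlt_coh : ∀ a b a' b' : Λ, lexlt a b → lt a a' → lt b b' →
    htOf lt predWO a' = htOf lt predWO b' → lexlt a' b'
  /-- immediate-successor sets at non-top levels are dense linear orders under `<lex` -/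
  succ_dense : ∀ t ∈ carrier, htOf lt predWO t < top →
    ∀ s₁ s₂ : Λ, lt t s₁ → lt t s₂ →
      htOf lt predWO s₁ = htOf lt predWO t + 1 → htOf lt predWO s₂ = htOf lt predWO t + 1 →
      lexlt s₁ s₂ → ∃ s₃ : Λ, lt t s₃ ∧ htOf lt predWO s₃ = htOf lt predWO t + 1 ∧
        lexlt s₁ s₃ ∧ lexlt s₃ s₂
  /-- the domain of the countable partial function `b_p : ω₂ ⇀ T_p(top)` -/
  bdom : Set Ordinal
  bdom_sub : bdom ⊆ Set.Iio omega2
  bdom_countable : bdom.Countable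
  bfun : Ordinal → Λ
  bfun_mem : ∀ ξ ∈ bdom, bfun ξ ∈ carrier ∧ htOf lt predWO (bfun ξ) = top

def QCond.ht {Λ : Type} (p : QCond Λ) : Λ → Ordinal := htOf p.lt p.predWO

/-- `QCond.le p q` means `p ≤ q`, i.e. `p` extends `q`: `T_p` restricted to heights
`≤ α_q` equals `T_q` (with the same lexicographic structure), `dom(b_p) ⊇ dom(b_q)`,
and `b_q(ξ) ≤_{T_p} b_p(ξ)` for every `ξ ∈ dom(b_q)`. -/
def QCond.le {Λ : Type} (p q : QCond Λ) : Prop :=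
  q.top ≤ p.top ∧
  q.carrier = {t ∈ p.carrier | p.ht t ≤ q.top} ∧
  (∀ a b : Λ, q.lt a b ↔ p.lt a b ∧ a ∈ q.carrier ∧ b ∈ q.carrier) ∧
  (∀ a b : Λ, q.lexlt a b ↔ p.lexlt a b ∧ a ∈ q.carrier ∧ b ∈ q.carrier) ∧
  q.bdom ⊆ p.bdom ∧
  (∀ ξ ∈ q.bdom, p.lt (q.bfun ξ) (p.bfun ξ) ∨ q.bfun ξ = p.bfun ξ)

/-!
Two conditions with the same tree `T_p = T_q` whose `b`-functions agree on the common domain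
have a common extension: keep the tree and take the union of the `b`'s. Under CH there are only
`ℵ₁` countable trees on `Λ`, so it suffices to show that a family of pairwise incompatible
countable partial functions into a set of size `ℵ₁` has size at most `ℵ₁`.

For that, close under the operation that adds, for every countable set `R` of the domains seen
so far, one function realising each possible restriction to `R`; iterate `ω₁` times. As
`ℵ₁ ^ ℵ₀ = ℵ₁`, the closure `G` has size `ℵ₁`. A function `g ∉ G` has countable domain, so
`R = dom g ∩ dom G` is covered at a countable stage, and the representative of `g|R` added
next is compatible with `g`: all of its domain lies in `dom G`, where it agrees with `g`. Hence
a pairwise incompatible family is contained in `G`.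
-/

universe u v

open scoped Ordinal

section ContinuumHypothesis

variable {α : Type u}

theorem continuum_eq_aleph_one_lift (hCH : (𝔠 : Cardinal.{v}) = ℵ₁) :
    (𝔠 : Cardinal.{u}) = ℵ₁ := by
  have h := congrArg Cardinal.lift.{u} hCH
  rw [← lift_inj.{u, v}]
  simpa using h

theorem power_le_aleph_one_of_continuum_eq (hCH : (𝔠 : Cardinal.{u}) = ℵ₁)
    {c d : Cardinal.{u}} (hc : c ≤ ℵ₁) (hd : d ≤ ℵ₀) : c ^ d ≤ ℵ₁ :=
  calc c ^ d ≤ ℵ₁ ^ d := power_le_power_right hc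
    _ ≤ ℵ₁ ^ ℵ₀ := power_le_power_left (aleph_pos 1).ne' hd
    _ = ℵ₁ := by rw [← hCH, continuum_power_aleph0]

theorem mk_countable_subsets_le (hCH : (𝔠 : Cardinal.{u}) = ℵ₁) (s : Set α) (hs : #s ≤ ℵ₁) :
    #{t : Set α // t ⊆ s ∧ t.Countable} ≤ ℵ₁ := by
  simp_rw [← le_aleph0_iff_set_countable]
  exact (mk_bounded_subset_le s ℵ₀).trans
    (power_le_aleph_one_of_continuum_eq hCH (max_le hs (aleph0_le_aleph 1)) le_rfl)

theorem mk_countable_sets_le (hCH : (𝔠 : Cardinal.{u}) = ℵ₁) (hα : #α ≤ ℵ₁) :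
    #{t : Set α // t.Countable} ≤ ℵ₁ := by
  simp_rw [← le_aleph0_iff_set_countable]
  exact (mk_bounded_set_le α ℵ₀).trans
    (power_le_aleph_one_of_continuum_eq hCH (max_le hα (aleph0_le_aleph 1)) le_rfl)

end ContinuumHypothesis

section PartialFunctions

variable {ι σ : Type u} {Λ : Type v}

/-- Partial functions `σ ⇀ Λ` are encoded as `σ → Option Λ`. -/
def partialDom (g : σ → Option Λ) : Set σ := {ξ | (g ξ).isSome}

def PartialCompatible (g h : σ → Option Λ) : Prop := ∀ ξ, ∀ x ∈ g ξ, ∀ y ∈ h ξ, x = y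

variable (f : ι → σ → Option Λ)

def domUnion (X : Set ι) : Set σ := ⋃ i ∈ X, partialDom (f i)

/-- One index `j` for each function `R → Option Λ` of the form `R.domRestrict (f i)`. -/
def restrictionReps (R : Set σ) : Set ι :=
  range fun g : range (fun i => R.domRestrict (f i)) => g.2.choose

def closureStep (X : Set ι) : Set ι :=
  X ∪ ⋃ R : {R : Set σ // R ⊆ domUnion f X ∧ R.Countable}, restrictionReps f R.1

def closureChain (α : Ordinal.{u}) : Set ι :=
  closureStep f (⋃ β < α, closureChain β)
termination_by α

def restrictionClosure : Set ι := ⋃ α < ω₁, closureChain f α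

theorem domUnion_mono {X Y : Set ι} (h : X ⊆ Y) : domUnion f X ⊆ domUnion f Y :=
  biUnion_subset_biUnion_left h

theorem exists_mem_restrictionReps (R : Set σ) (i : ι) :
    ∃ j ∈ restrictionReps f R, R.domRestrict (f j) = R.domRestrict (f i) :=
  let g : range (fun i => R.domRestrict (f i)) := ⟨_, i, rfl⟩
  ⟨g.2.choose, ⟨g, rfl⟩, g.2.choose_spec⟩

theorem closureChain_mono : Monotone (closureChain f) := by
  intro α β h i hi
  rcases h.eq_or_lt with rfl | h
  · exact hi
  rw [closureChain]
  exact subset_union_left (mem_biUnion h hi)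

variable {f}

theorem mk_restrictionReps_le (hCH : (𝔠 : Cardinal.{u}) = ℵ₁) (hΛ : #Λ ≤ ℵ₁) {R : Set σ}
    (hR : R.Countable) : #(restrictionReps f R) ≤ ℵ₁ := by
  rw [← lift_le_aleph_one.{u, max u v}]
  refine mk_range_le_lift.trans ?_
  rw [lift_le_aleph_one]
  refine (mk_subtype_le _).trans ?_
  rw [mk_arrow, mk_option]
  refine power_le_aleph_one_of_continuum_eq (continuum_eq_aleph_one_lift hCH) ?_ ?_
  · have h : #Λ + 1 ≤ ℵ₁ :=
      add_le_of_le (aleph0_le_aleph 1) hΛ (one_le_aleph0.trans (aleph0_le_aleph 1))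
    simpa using lift_le_aleph_one.{v, u}.2 h
  · simpa using hR

theorem mk_domUnion_le (hf : ∀ i, (partialDom (f i)).Countable) {X : Set ι} (hX : #X ≤ ℵ₁) :
    #(domUnion f X) ≤ ℵ₁ := by
  refine (mk_biUnion_le _ X).trans (mul_le_of_le (aleph0_le_aleph 1) hX (ciSup_le' fun i => ?_))
  exact (le_aleph0_iff_set_countable.2 (hf i)).trans (aleph0_le_aleph 1)

theorem mk_closureStep_le (hCH : (𝔠 : Cardinal.{u}) = ℵ₁) (hΛ : #Λ ≤ ℵ₁)
    (hf : ∀ i, (partialDom (f i)).Countable) {X : Set ι} (hX : #X ≤ ℵ₁) :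
    #(closureStep f X) ≤ ℵ₁ := by
  refine (mk_union_le _ _).trans (add_le_of_le (aleph0_le_aleph 1) hX ?_)
  refine (mk_iUnion_le _).trans (mul_le_of_le (aleph0_le_aleph 1) ?_ ?_)
  · exact mk_countable_subsets_le hCH _ (mk_domUnion_le hf hX)
  · exact ciSup_le' fun R => mk_restrictionReps_le hCH hΛ R.2.2

theorem mk_closureChain_le (hCH : (𝔠 : Cardinal.{u}) = ℵ₁) (hΛ : #Λ ≤ ℵ₁)
    (hf : ∀ i, (partialDom (f i)).Countable) (α : Ordinal.{u}) (hα : α ≤ ω₁) :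
    #(closureChain f α) ≤ ℵ₁ := by
  induction α using WellFoundedLT.induction with
  | _ α IH =>
  rw [closureChain]
  refine mk_closureStep_le hCH hΛ hf (mk_biUnion_le_of_le ?_ (aleph0_le_aleph 1) _ ?_)
  · simpa using Ordinal.card_le_card hα
  · exact fun β hβ => IH β hβ (hβ.le.trans hα)

theorem mk_restrictionClosure_le (hCH : (𝔠 : Cardinal.{u}) = ℵ₁) (hΛ : #Λ ≤ ℵ₁)
    (hf : ∀ i, (partialDom (f i)).Countable) : #(restrictionClosure f) ≤ ℵ₁ :=
  mk_biUnion_le_of_le (by simp) (aleph0_le_aleph 1) _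
    fun β hβ => mk_closureChain_le hCH hΛ hf β hβ.le

theorem exists_lt_omega_one_subset_domUnion_closureChain {R : Set σ} (hR : R.Countable)
    (hRG : R ⊆ domUnion f (restrictionClosure f)) :
    ∃ α < ω₁, R ⊆ domUnion f (closureChain f α) := by
  have hstage : ∀ ξ : R, ∃ α < ω₁, ξ.1 ∈ domUnion f (closureChain f α) := by
    rintro ⟨ξ, hξ⟩
    obtain ⟨i, hi, hξi⟩ := mem_iUnion₂.1 (hRG hξ)
    obtain ⟨α, hα, hiα⟩ := mem_iUnion₂.1 hi
    exact ⟨α, hα, mem_biUnion hiα hξi⟩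
  choose α hα hξα using hstage
  have : Countable R := hR.to_subtype
  refine ⟨⨆ ξ, α ξ, Ordinal.iSup_lt_omega_one hα, fun ξ hξ => ?_⟩
  exact domUnion_mono f (closureChain_mono f (Ordinal.le_iSup α ⟨ξ, hξ⟩)) (hξα ⟨ξ, hξ⟩)

theorem exists_mem_restrictionClosure_eqOn {R : Set σ} (hR : R.Countable)
    (hRG : R ⊆ domUnion f (restrictionClosure f)) (i : ι) :
    ∃ j ∈ restrictionClosure f, EqOn (f j) (f i) R := by
  obtain ⟨α, hα, hRα⟩ := exists_lt_omega_one_subset_domUnion_closureChain hR hRG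
  obtain ⟨j, hj, hji⟩ := exists_mem_restrictionReps f R i
  refine ⟨j, mem_biUnion ((isSuccLimit_omega 1).succ_lt hα) ?_,
    domRestrict_eq_domRestrict_iff.1 hji⟩
  rw [closureChain]
  refine subset_union_right (mem_iUnion.2 ⟨⟨R, ?_, hR⟩, hj⟩)
  exact hRα.trans (domUnion_mono f (subset_biUnion_of_mem (Order.lt_succ α)))

theorem mk_le_aleph_one_of_pairwise_not_partialCompatible (hCH : (𝔠 : Cardinal.{u}) = ℵ₁)
    (hΛ : #Λ ≤ ℵ₁) (hf : ∀ i, (partialDom (f i)).Countable)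
    (hinc : Pairwise fun i j => ¬ PartialCompatible (f i) (f j)) : #ι ≤ ℵ₁ := by
  suffices h : ∀ i, i ∈ restrictionClosure f by
    rw [← mk_univ]
    exact (mk_le_mk_of_subset fun i _ => h i).trans (mk_restrictionClosure_le hCH hΛ hf)
  intro i
  by_contra hi
  obtain ⟨j, hj, hji⟩ := exists_mem_restrictionClosure_eqOn (f := f)
    ((hf i).mono inter_subset_left) (inter_subset_right (s := partialDom (f i))) i
  refine hinc (fun h : i = j => hi (h ▸ hj)) fun ξ x hx y hy => ?_
  have hξ : ξ ∈ partialDom (f i) ∩ domUnion f (restrictionClosure f) :=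
    ⟨by simp [partialDom, Option.mem_def.1 hx],
      mem_biUnion hj (by simp [partialDom, Option.mem_def.1 hy])⟩
  rw [Option.mem_def, ← hji hξ, hy] at hx
  exact (Option.some_injective _ hx).symm

end PartialFunctions

/-- Countable trees on `Λ`, recorded as (carrier, tree order, lexicographic order), the two
relations as sets of pairs. -/
abbrev TreeData (Λ : Type u) : Type u :=
  {s : Set Λ // s.Countable} × {s : Set (Λ × Λ) // s.Countable} × {s : Set (Λ × Λ) // s.Countable}

theorem mk_treeData_le {Λ : Type u} (hCH : (𝔠 : Cardinal.{u}) = ℵ₁) (hΛ : #Λ ≤ ℵ₁) :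
    #(TreeData Λ) ≤ ℵ₁ := by
  have hΛ₂ : #(Λ × Λ) ≤ ℵ₁ := by
    simpa using mul_le_of_le (aleph0_le_aleph 1) hΛ hΛ
  have h₂ := mk_countable_sets_le hCH hΛ₂
  simpa using mul_le_of_le (aleph0_le_aleph 1) (mk_countable_sets_le hCH hΛ)
    (mul_le_of_le (aleph0_le_aleph 1) h₂ h₂)

theorem htOf_congr {X : Type} {lt lt' : X → X → Prop} (h : lt = lt')
    (wo : ∀ t : X, IsWellOrder {s : X // lt s t} fun a b => lt a.1 b.1)
    (wo' : ∀ t : X, IsWellOrder {s : X // lt' s t} fun a b => lt' a.1 b.1) :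
    htOf lt wo = htOf lt' wo' := by
  subst h
  rfl

namespace QCond

variable {Λ : Type}

theorem countable_setOf_lt (p : QCond Λ) : {x : Λ × Λ | p.lt x.1 x.2}.Countable :=
  (p.carrier_countable.prod p.carrier_countable).mono fun _ hx => p.lt_mem _ _ hx

theorem countable_setOf_lexlt (p : QCond Λ) : {x : Λ × Λ | p.lexlt x.1 x.2}.Countable :=
  (p.carrier_countable.prod p.carrier_countable).mono fun _ hx =>
    mem_prod.2 ⟨(p.lexlt_same _ _ hx).1, (p.lexlt_same _ _ hx).2.1⟩

def tree (p : QCond Λ) : TreeData Λ :=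
  (⟨p.carrier, p.carrier_countable⟩, ⟨_, p.countable_setOf_lt⟩, ⟨_, p.countable_setOf_lexlt⟩)

open Classical in
def bPart (p : QCond Λ) (ξ : Ordinal) : Option Λ :=
  if ξ ∈ p.bdom then some (p.bfun ξ) else none

theorem top_eq_of_tree_eq {p q : QCond Λ} (hc : p.carrier = q.carrier) (hlt : p.lt = q.lt) :
    p.top = q.top := by
  have hht : htOf p.lt p.predWO = htOf q.lt q.predWO := htOf_congr hlt _ _
  obtain ⟨s, hs, hsp⟩ := p.ht_surj p.top le_rfl
  obtain ⟨t, ht, htq⟩ := q.ht_surj q.top le_rfl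
  refine le_antisymm ?_ ?_
  · have := q.ht_le s (hc ▸ hs)
    rwa [← hht, hsp] at this
  · have := p.ht_le t (hc ▸ ht)
    rwa [hht, htq] at this

theorem tree_eq_iff {p q : QCond Λ} :
    p.tree = q.tree ↔ p.carrier = q.carrier ∧ p.lt = q.lt ∧ p.lexlt = q.lexlt := by
  simp only [tree, Prod.mk.injEq, Subtype.mk.injEq, Set.ext_iff, mem_ofPred_eq, Prod.forall,
    funext_iff, eq_iff_iff]

theorem le_of_tree_eq {r q : QCond Λ} (h : r.tree = q.tree) (hb : q.bdom ⊆ r.bdom)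
    (hf : EqOn r.bfun q.bfun q.bdom) : r.le q := by
  obtain ⟨hc, hlt, hlex⟩ := tree_eq_iff.1 h
  have hht : htOf r.lt r.predWO = htOf q.lt q.predWO := htOf_congr hlt _ _
  refine ⟨(top_eq_of_tree_eq hc hlt).ge, ?_, fun a b => ?_, fun a b => ?_, hb,
    fun ξ hξ => Or.inr (hf hξ).symm⟩
  · ext t
    rw [← hc, mem_ofPred_eq, QCond.ht, hht]
    exact ⟨fun ht => ⟨ht, q.ht_le t (hc ▸ ht)⟩, And.left⟩
  · rw [hlt]
    exact ⟨fun h => ⟨h, q.lt_mem a b h⟩, And.left⟩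
  · rw [hlex]
    exact ⟨fun h => ⟨h, (q.lexlt_same a b h).1, (q.lexlt_same a b h).2.1⟩, And.left⟩

theorem exists_le_le_of_tree_eq {p q : QCond Λ} (h : p.tree = q.tree)
    (hb : EqOn p.bfun q.bfun (p.bdom ∩ q.bdom)) : ∃ r : QCond Λ, r.le p ∧ r.le q := by
  classical
  obtain ⟨hc, hlt, -⟩ := tree_eq_iff.1 h
  have hht : htOf p.lt p.predWO = htOf q.lt q.predWO := htOf_congr hlt _ _
  let r : QCond Λ :=
    { p with
      bdom := p.bdom ∪ q.bdom
      bdom_sub := union_subset p.bdom_sub q.bdom_sub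
      bdom_countable := p.bdom_countable.union q.bdom_countable
      bfun := fun ξ => if ξ ∈ p.bdom then p.bfun ξ else q.bfun ξ
      bfun_mem := fun ξ hξ => by
        by_cases hp : ξ ∈ p.bdom
        · simpa only [if_pos hp] using p.bfun_mem ξ hp
        · simpa only [if_neg hp, hc, hht, top_eq_of_tree_eq hc hlt] using
            q.bfun_mem ξ (hξ.resolve_left hp) }
  refine ⟨r, le_of_tree_eq rfl subset_union_left fun ξ hξ => if_pos hξ,
    le_of_tree_eq h subset_union_right fun ξ hξ => ?_⟩
  by_cases hp : ξ ∈ p.bdom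
  · exact (if_pos hp).trans (hb ⟨hp, hξ⟩)
  · exact if_neg hp

theorem partialDom_bPart (p : QCond Λ) : partialDom p.bPart = p.bdom := by
  ext ξ
  by_cases h : ξ ∈ p.bdom <;> simp [partialDom, bPart, h]

theorem eqOn_bfun_of_partialCompatible {p q : QCond Λ}
    (h : PartialCompatible p.bPart q.bPart) : EqOn p.bfun q.bfun (p.bdom ∩ q.bdom) := fun ξ hξ =>
  h ξ _ (by simp [bPart, hξ.1]) _ (by simp [bPart, hξ.2])

end QCond

theorem mk_le_aleph_one_of_tree_eq {Λ : Type} (hCH : (𝔠 : Cardinal.{1}) = ℵ₁) (hΛ : #Λ ≤ ℵ₁)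
    (B : Set (QCond Λ)) (htree : ∀ p ∈ B, ∀ q ∈ B, p.tree = q.tree)
    (hB : B.Pairwise fun p q => ¬ ∃ r : QCond Λ, r.le p ∧ r.le q) : #B ≤ ℵ₁ := by
  refine mk_le_aleph_one_of_pairwise_not_partialCompatible (f := fun p : B => p.1.bPart)
    hCH hΛ (fun p => p.1.partialDom_bPart ▸ p.1.bdom_countable) fun p q hpq hcompat => ?_
  exact hB p.2 q.2 (Subtype.coe_ne_coe.2 hpq)
    (QCond.exists_le_le_of_tree_eq (htree _ p.2 _ q.2)
      (QCond.eqOn_bfun_of_partialCompatible hcompat))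

/-- Assuming CH, the poset `Q` satisfies the `ℵ₂`-chain condition: every
set of pairwise incompatible conditions has cardinality at most `ℵ₁`. -/
theorem stmt8 (Λ : Type) (hΛ : #Λ = Cardinal.aleph 1)
    (hCH : (2 : Cardinal) ^ Cardinal.aleph 0 = Cardinal.aleph 1)
    (A : Set (QCond Λ))
    (hA : ∀ p ∈ A, ∀ q ∈ A, p ≠ q → ¬ ∃ r : QCond Λ, QCond.le r p ∧ QCond.le r q) :
    #A ≤ Cardinal.aleph 1 := by
  rw [aleph_zero, two_power_aleph0] at hCH
  have hfiber : ∀ d : TreeData Λ, #{p ∈ A | p.tree = d} ≤ ℵ₁ := fun d =>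
    mk_le_aleph_one_of_tree_eq (continuum_eq_aleph_one_lift hCH) hΛ.le _
      (fun p hp q hq => hp.2.trans hq.2.symm) fun p hp q hq => hA p hp.1 q hq.1
  have hcover : A ⊆ ⋃ d : TreeData Λ, {p ∈ A | p.tree = d} := fun p hp =>
    mem_iUnion.2 ⟨p.tree, hp, rfl⟩
  calc #A ≤ #(⋃ d : TreeData Λ, {p ∈ A | p.tree = d}) := mk_le_mk_of_subset hcover
    _ = lift.{0} #(⋃ d : TreeData Λ, {p ∈ A | p.tree = d}) := (lift_uzero _).symm
    _ ≤ lift.{1} #(TreeData Λ) * ⨆ d : TreeData Λ, lift.{0} #{p ∈ A | p.tree = d} :=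
      mk_iUnion_le_lift _
    _ ≤ ℵ₁ := mul_le_of_le (aleph0_le_aleph 1)
      (lift_le_aleph_one.2 (mk_treeData_le (continuum_eq_aleph_one_lift hCH) hΛ.le))
      (ciSup_le' fun d => by simpa using hfiber d)
end
end

section
/- Let T be a lexicographically ordered ω₁-tree, L ⊆ 𝓑(T), and U = ⋃L. Assume that for every t ∈ U the set {c ∈ L : t ∈ c} has cardinality at least ℵ₂. If b ∈ L is not a local left end point of U and t ∈ b, then the set {c ∈ L : t ∈ c and c <lex b} has cardinality at least ℵ₂. -/
noncomputable section

open Cardinal Set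

/-! Since `b` is not a local left end point, above any `t ∈ b` some node `u ≥ t` of `⋃L` lies
lexicographically left of the node of `b` at its height. Every branch of `L` through `u` passes
through `t` and is `<lex b`, and by hypothesis there are `ℵ₂` of them. -/

namespace LexOmega1Tree

variable {S : LexOmega1Tree}

theorem IsBranch.mem_of_le {c : Set S.T} (hc : S.IsBranch c) {t u : S.T} (hu : u ∈ c)
    (htu : S.le t u) : t ∈ c := by
  rcases htu with h | rfl
  · exact hc.1 t u hu h
  · exact hu

theorem exists_lexlt_of_not_isLocalLeftEP {W b : Set S.T} (hnl : ¬ S.IsLocalLeftEP W b)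
    {t : S.T} (htb : t ∈ b) : ∃ s ∈ b, ∃ u ∈ W, S.le t u ∧ S.lexlt u s := by
  by_contra! h
  refine hnl ⟨t, htb, fun s hsb _ u huW hus htu => ?_⟩
  by_cases hne : u = s
  · exact .inl hne
  · exact .inr ((S.lexlt_tricho u s hus hne).resolve_left (h s hsb u huW htu))

end LexOmega1Tree

theorem stmt11_general (S : LexOmega1Tree) (L : Set (Set S.T)) (hL : ∀ b ∈ L, S.IsBranch b)
    (hbig : ∀ t ∈ {t : S.T | ∃ c ∈ L, t ∈ c},
      Cardinal.aleph 2 ≤ #{c : Set S.T | c ∈ L ∧ t ∈ c})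
    (b : Set S.T)
    (hnl : ¬ S.IsLocalLeftEP {t : S.T | ∃ c ∈ L, t ∈ c} b)
    (t : S.T) (htb : t ∈ b) :
    Cardinal.aleph 2 ≤ #{c : Set S.T | c ∈ L ∧ t ∈ c ∧ S.blex c b} := by
  obtain ⟨s, hsb, u, huU, htu, hus⟩ := S.exists_lexlt_of_not_isLocalLeftEP hnl htb
  have hsub : {c : Set S.T | c ∈ L ∧ u ∈ c} ⊆ {c | c ∈ L ∧ t ∈ c ∧ S.blex c b} :=
    fun c ⟨hcL, huc⟩ => ⟨hcL, (hL c hcL).mem_of_le huc htu, u, huc, s, hsb, hus⟩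
  exact (hbig u huU).trans (Cardinal.mk_le_mk_of_subset hsub)

/-- Let `L ⊆ 𝓑(T)` and `U = ⋃L`, and assume every `t ∈ U` lies on at least
`ℵ₂`-many branches from `L`. If `b ∈ L` is not a local left end point of `U` and `t ∈ b`,
then at least `ℵ₂`-many branches `c ∈ L` pass through `t` with `c <lex b`. -/
theorem stmt11 (S : LexOmega1Tree) (L : Set (Set S.T)) (hL : ∀ b ∈ L, S.IsBranch b)
    (hbig : ∀ t ∈ {t : S.T | ∃ c ∈ L, t ∈ c},
      Cardinal.aleph 2 ≤ #{c : Set S.T | c ∈ L ∧ t ∈ c})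
    (b : Set S.T) (hb : b ∈ L)
    (hnl : ¬ S.IsLocalLeftEP {t : S.T | ∃ c ∈ L, t ∈ c} b)
    (t : S.T) (htb : t ∈ b) :
    Cardinal.aleph 2 ≤ #{c : Set S.T | c ∈ L ∧ t ∈ c ∧ S.blex c b} :=
  stmt11_general S L hL hbig b hnl t htb
end
end

section
/- Let T be an ω₁-tree and let L ⊆ 𝓑(T) have cardinality ℵ₂. Then there exists L' ⊆ L of cardinality ℵ₂ such that for every t ∈ ⋃L', the set {c ∈ L' : t ∈ c} has cardinality exactly ℵ₂ (that is, ⋃L' is everywhere Kurepa with respect to L'). -/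
noncomputable section

open Cardinal Set

/-- An `ω₁`-tree (no lexicographic structure). -/
structure Omega1Tree where
  T : Type
  lt : T → T → Prop
  lt_irrefl : ∀ a : T, ¬ lt a a
  lt_trans : ∀ {a b c : T}, lt a b → lt b c → lt a c
  /-- the strict predecessors of any element are well-ordered -/
  predWO : ∀ t : T, IsWellOrder {s : T // lt s t} fun a b => lt a.1 b.1
  /-- every level is countable -/
  level_countable : ∀ α : Ordinal, {t : T | htOf lt predWO t = α}.Countable
  /-- levels are nonempty exactly below `ω₁` -/
  level_nonempty : ∀ α : Ordinal, (∃ t : T, htOf lt predWO t = α) ↔ α < omega1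

namespace Omega1Tree

variable (S : Omega1Tree)

def ht : S.T → Ordinal := htOf S.lt S.predWO

/-- a cofinal branch : a downward closed chain meeting every level -/
def IsBranch (b : Set S.T) : Prop :=
  (∀ s t : S.T, t ∈ b → S.lt s t → s ∈ b) ∧
  (∀ s t : S.T, s ∈ b → t ∈ b → s = t ∨ S.lt s t ∨ S.lt t s) ∧
  (∀ α : Ordinal, α < omega1 → ∃ t ∈ b, S.ht t = α)

/-- the set `𝓑(T)` of cofinal branches -/
def Branch : Type := {b : Set S.T // S.IsBranch b}

end Omega1Tree

/-!
Since `T` has `ℵ₁` levels, each countable, `|T| ≤ ℵ₁`. Call a node thin if at most `ℵ₁`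
members of `L` pass through it; the members of `L` through some thin node then number at most
`ℵ₁ · ℵ₁ = ℵ₁`, and discarding them leaves `ℵ₂` branches on which every node is passed by
`ℵ₂` of them. The argument works for any family of `κ⁺` subsets of a set of size `κ`.
-/

namespace Cardinal

theorem mk_diff_eq_of_mk_lt {α : Type*} {s t : Set α} (hs : ℵ₀ ≤ #s) (ht : #t < #s) :
    #(s \ t : Set α) = #s := by
  refine eq_of_add_eq_of_aleph0_le (a := #(s ∩ t : Set α)) ?_ ?_ hs
  · rw [add_comm, ← sdiff_self_inter, mk_sdiff_add_mk inter_subset_left]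
  · exact (mk_le_mk_of_subset inter_subset_right).trans_lt ht

theorem exists_subfamily_mk_mem_eq_succ {X : Type*} {κ : Cardinal} (hκ : ℵ₀ ≤ κ)
    (hX : #X ≤ κ) {L : Set (Set X)} (hL : #L = Order.succ κ) :
    ∃ L' ⊆ L, #L' = Order.succ κ ∧
      ∀ t : X, (∃ c ∈ L', t ∈ c) → #{c : Set X | c ∈ L' ∧ t ∈ c} = Order.succ κ := by
  set thin : Set X := {t | #{c : Set X | c ∈ L ∧ t ∈ c} ≤ κ}
  set D : Set (Set X) := ⋃ t ∈ thin, {c | c ∈ L ∧ t ∈ c}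
  have hsucc : ℵ₀ ≤ Order.succ κ := hκ.trans (Order.le_succ κ)
  have hD : #D < Order.succ κ := by
    refine Order.lt_succ_iff.2 ((mk_biUnion_le _ thin).trans ?_)
    calc #thin * ⨆ t : thin, #{c : Set X | c ∈ L ∧ t.1 ∈ c}
        ≤ κ * κ := mul_le_mul' ((mk_set_le thin).trans hX) (ciSup_le' fun t => t.2)
      _ = κ := mul_eq_self hκ
  refine ⟨L \ D, sdiff_subset, ?_, ?_⟩
  · rw [mk_diff_eq_of_mk_lt (hL ▸ hsucc) (hL ▸ hD), hL]
  · rintro t ⟨c, ⟨hcL, hcD⟩, htc⟩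
    have hthick : Order.succ κ ≤ #{c : Set X | c ∈ L ∧ t ∈ c} := by
      refine Order.succ_le_of_lt (not_le.1 fun ht => hcD ?_)
      exact mem_biUnion (x := t) ht ⟨hcL, htc⟩
    have hbound : #{c : Set X | c ∈ L ∧ t ∈ c} ≤ Order.succ κ :=
      hL ▸ mk_le_mk_of_subset fun c hc => hc.1
    have hthrough : {c : Set X | c ∈ L \ D ∧ t ∈ c} = {c : Set X | c ∈ L ∧ t ∈ c} \ D := by
      ext c
      simp only [mem_ofPred_eq, mem_sdiff]
      tauto
    have heq := le_antisymm hbound hthick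
    rw [hthrough, mk_diff_eq_of_mk_lt (heq ▸ hsucc) (heq ▸ hD), heq]

end Cardinal

theorem Omega1Tree.mk_T_le_aleph_one (S : Omega1Tree) : #S.T ≤ ℵ_ 1 := by
  have hcover : (univ : Set S.T) = ⋃ α < omega1, {t | S.ht t = α} := by
    ext t
    simpa using (S.level_nonempty (S.ht t)).1 ⟨t, rfl⟩
  rw [← mk_univ, hcover]
  refine mk_biUnion_le_of_le (by simp [omega1]) (aleph0_le_aleph 1) _ fun α _ => ?_
  exact (S.level_countable α).le_aleph0.trans (aleph0_le_aleph 1)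

theorem stmt13_general (S : Omega1Tree) (L : Set (Set S.T))
    (hcard : #L = Cardinal.aleph 2) :
    ∃ L' ⊆ L, #L' = Cardinal.aleph 2 ∧
      ∀ t : S.T, (∃ c ∈ L', t ∈ c) →
        #{c : Set S.T | c ∈ L' ∧ t ∈ c} = Cardinal.aleph 2 := by
  have h2 : ℵ_ 2 = Order.succ (ℵ_ 1) := by rw [succ_aleph, one_add_one_eq_two]
  rw [h2] at hcard ⊢
  exact exists_subfamily_mk_mem_eq_succ (aleph0_le_aleph 1) S.mk_T_le_aleph_one hcard

/-- If `T` is an `ω₁`-tree and `L ⊆ 𝓑(T)` has cardinality `ℵ₂`, then there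
is `L' ⊆ L` of cardinality `ℵ₂` such that every `t ∈ ⋃L'` lies on exactly `ℵ₂`-many
branches of `L'` (i.e. `⋃L'` is everywhere Kurepa with respect to `L'`). -/
theorem stmt13 (S : Omega1Tree) (L : Set (Set S.T)) (hL : ∀ b ∈ L, S.IsBranch b)
    (hcard : #L = Cardinal.aleph 2) :
    ∃ L' ⊆ L, #L' = Cardinal.aleph 2 ∧
      ∀ t : S.T, (∃ c ∈ L', t ∈ c) →
        #{c : Set S.T | c ∈ L' ∧ t ∈ c} = Cardinal.aleph 2 :=
  stmt13_general S L hcard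
end
end
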